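/- arXiv:2504.17716 — 3 statements merged into one kernel-verified Lean document; each statement's English description precedes it below -/
import Mathlib

section
/- Let (M,d) be a metric space, let r ≥ 0, and let C be an r-net of a finite nonempty set X ⊆ M. Then (|C| − 1)·r ≤ 2·MST(X). -/
/-- The length of a walk `w₀, w₁, …, w_k`, given as a list: the sum of distances
between consecutive entries. -/
noncomputable def seqCost {M : Type*} [MetricSpace M] : List M → ℝ
  | [] => 0
  | [_] => 0
  | a :: b :: t => dist a b + seqCost (b :: t)

/-- `OPT` of a finite set of points: the minimum, over all enumerations of the
set (each element exactly once), of the sum of consecutive distances. -/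
noncomputable def OPTset {M : Type*} [MetricSpace M] (X : Finset M) : ℝ :=
  sInf { c : ℝ | ∃ l : List M, l.Nodup ∧ (∀ a, a ∈ l ↔ a ∈ X) ∧ c = seqCost l }

section SeqCost
variable {M : Type*} [MetricSpace M]

lemma seqCost_nonneg (l : List M) : 0 ≤ seqCost l := by
  induction l with
  | nil => simp [seqCost]
  | cons a t ih =>
    cases t with
    | nil => simp [seqCost]
    | cons b t' =>
      simp only [seqCost]
      have := dist_nonneg (x := a) (y := b)
      linarith

lemma seqCost_cons_le (a : M) (l : List M) : seqCost l ≤ seqCost (a :: l) := by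
  cases l with
  | nil => simp [seqCost]
  | cons b t =>
    simp only [seqCost]
    have := dist_nonneg (x := a) (y := b)
    linarith

lemma seqCost_skip (a b : M) (l : List M) :
    seqCost (a :: l) ≤ dist a b + seqCost (b :: l) := by
  cases l with
  | nil => simpa [seqCost] using dist_nonneg
  | cons c t =>
    simp only [seqCost]
    have := dist_triangle a b c
    linarith

lemma seqCost_sublist_cons {l₁ l₂ : List M} (h : l₁.Sublist l₂) (a : M) :
    seqCost (a :: l₁) ≤ seqCost (a :: l₂) := by
  induction h generalizing a with
  | slnil => exact le_refl _
  | @cons l₁ l₂ b h ih =>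
    calc seqCost (a :: l₁) ≤ seqCost (a :: l₂) := ih a
    _ ≤ dist a b + seqCost (b :: l₂) := seqCost_skip a b l₂
    _ = seqCost (a :: b :: l₂) := by simp [seqCost]
  | @cons_cons l₁ l₂ b h ih =>
    simp only [seqCost]
    have := ih b
    linarith

lemma seqCost_sublist {l₁ l₂ : List M} (h : l₁.Sublist l₂) :
    seqCost l₁ ≤ seqCost l₂ := by
  induction h with
  | slnil => exact le_refl _
  | @cons l₁ l₂ b h ih => exact le_trans ih (seqCost_cons_le b l₂)
  | @cons_cons l₁ l₂ b h ih => exact seqCost_sublist_cons h b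

lemma seqCost_separated {r : ℝ} (hr : 0 ≤ r) (l : List M)
    (hp : l.Pairwise (fun a b => r < dist a b)) :
    ((l.length : ℝ) - 1) * r ≤ seqCost l := by
  induction l with
  | nil => simp [seqCost]; linarith
  | cons a t ih =>
    cases t with
    | nil => simp [seqCost]
    | cons b t' =>
      have hab : r < dist a b := (List.pairwise_cons.1 hp).1 b (by simp)
      have ht := ih (List.pairwise_cons.1 hp).2
      simp only [seqCost, List.length_cons] at ht ⊢
      push_cast at ht ⊢
      linarith
end SeqCost

open SimpleGraph in
lemma seqCost_walk_support {M : Type*} [MetricSpace M] {V : Type*} (f : V → M)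
    {G : SimpleGraph V} {u v : V} (p : G.Walk u v) :
    seqCost (p.support.map f)
      = (p.edges.map (fun e =>
          Sym2.lift ⟨fun a b => dist (f a) (f b), fun _ _ => dist_comm _ _⟩ e)).sum := by
  induction p with
  | nil => simp [seqCost]
  | @cons u v' w h p ih =>
    rw [Walk.support_cons, Walk.edges_cons]
    conv_lhs => rw [p.support_eq_cons]
    simp only [List.map_cons, seqCost, List.sum_cons, Sym2.lift_mk]
    rw [← List.map_cons (f := f) (a := v') (l := p.support.tail), ← p.support_eq_cons, ih]

lemma sum_map_le_two_sum {α : Type*} [DecidableEq α] (wt : α → ℝ) (hwt : ∀ e, 0 ≤ wt e)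
    (s : Finset α) (l : List α) (hmem : ∀ e ∈ l, e ∈ s) (hcount : ∀ e, l.count e ≤ 2) :
    (l.map wt).sum ≤ 2 * ∑ e ∈ s, wt e := by
  have h1 : (l : Multiset α) ≤ 2 • s.val := by
    rw [Multiset.le_iff_count]
    intro a
    rw [Multiset.count_nsmul]
    by_cases ha : a ∈ s
    · have : Multiset.count a s.val = 1 := Multiset.count_eq_one_of_mem s.nodup ha
      rw [this]
      simpa using hcount a
    · have : Multiset.count a (l : Multiset α) = 0 := by
        rw [Multiset.count_eq_zero]
        exact fun hl => ha (hmem a (by exact_mod_cast hl))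
      rw [this]; positivity
  have h2 : ((l : Multiset α).map wt) ≤ (2 • s.val).map wt := Multiset.map_le_map h1
  obtain ⟨u, hu⟩ := Multiset.le_iff_exists_add.1 h2
  have hsum : ((2 • s.val).map wt).sum = ((l : Multiset α).map wt).sum + u.sum := by
    rw [hu, Multiset.sum_add]
  have hu0 : 0 ≤ u.sum := by
    apply Multiset.sum_nonneg
    intro x hx
    have : x ∈ (2 • s.val).map wt := by rw [hu]; exact Multiset.mem_add.2 (Or.inr hx)
    obtain ⟨e, _, rfl⟩ := Multiset.mem_map.1 this
    exact hwt e
  have hsum2 : ((2 • s.val).map wt).sum = 2 * ∑ e ∈ s, wt e := by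
    rw [Multiset.map_nsmul, Multiset.sum_nsmul, nsmul_eq_mul]
    rfl
  have : ((l : Multiset α).map wt).sum = (l.map wt).sum := by simp
  linarith [hsum, hsum2, this]

open SimpleGraph Walk in
lemma exists_euler_walk {V : Type*} [Fintype V] [DecidableEq V] :
    ∀ (n : ℕ) (G : SimpleGraph V), G.IsAcyclic → ∀ (v : V),
      G.edgeSet.toFinite.toFinset.card ≤ n →
      ∃ p : G.Walk v v, (∀ w, G.Reachable v w → w ∈ p.support) ∧
        ∀ e, p.edges.count e ≤ 2 := by
  intro n
  induction n with
  | zero =>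
    intro G hA v hcard
    refine ⟨Walk.nil, ?_, by simp⟩
    intro w hw
    obtain ⟨q⟩ := hw
    cases q with
    | nil => simp
    | cons h q =>
      exfalso
      have : s(v, _) ∈ G.edgeSet := h
      have hmem : s(v, _) ∈ G.edgeSet.toFinite.toFinset := (Set.Finite.mem_toFinset _).2 this
      have := Finset.card_pos.2 ⟨_, hmem⟩
      omega
  | succ n ih =>
    intro G hA v hcard
    by_cases hall : ∀ w, G.Reachable v w → w = v
    · exact ⟨Walk.nil, fun w hw => by simp [hall w hw], by simp⟩
    · push_neg at hall
      obtain ⟨w₀, hw₀r, hw₀⟩ := hall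
      -- a longest path starting at v
      set P : Set ℕ := {m | ∃ (w : V) (p : G.Walk v w), p.IsPath ∧ p.length = m} with hP
      have hPne : P.Nonempty := by
        obtain ⟨q0⟩ := hw₀r
        exact ⟨_, w₀, (q0.toPath : G.Walk v w₀), q0.toPath.2, rfl⟩
      have hPbdd : BddAbove P := by
        refine ⟨Fintype.card V, ?_⟩
        rintro m ⟨w, p, hp, rfl⟩
        exact le_of_lt hp.length_lt
      obtain ⟨u, q, hq, hqlen⟩ := Nat.sSup_mem hPne hPbdd
      have hmax : ∀ (w : V) (p : G.Walk v w), p.IsPath → p.length ≤ sSup P :=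
        fun w p hp => le_csSup hPbdd ⟨w, p, hp, rfl⟩
      have hq1 : 1 ≤ q.length := by
        rw [hqlen]
        obtain ⟨q0⟩ := hw₀r
        have h0 := hmax w₀ (q0.toPath : G.Walk v w₀) q0.toPath.2
        rcases Nat.eq_zero_or_pos (q0.toPath : G.Walk v w₀).length with h | h
        · exact absurd (Walk.eq_of_length_eq_zero h) hw₀.symm
        · omega
      have huv : u ≠ v := by
        rintro rfl
        have := (Walk.isPath_iff_eq_nil (p := q)).1 hq
        subst this
        simp at hq1
      obtain ⟨t, h, r, hqr⟩ := Walk.exists_eq_cons_of_ne huv q.reverse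
      have hqrPath : (Walk.cons h r).IsPath := by rw [← hqr]; exact hq.reverse
      have hrPath : r.IsPath := (Walk.cons_isPath_iff _ _).1 hqrPath |>.1
      have hur : u ∉ r.support := (Walk.cons_isPath_iff _ _).1 hqrPath |>.2
      -- u is a leaf with unique neighbor t
      have hleaf : ∀ x, G.Adj u x → x = t := by
        intro x hx
        by_contra hxt
        by_cases hxs : x ∈ q.support
        · -- cycle
          have hxr : x ∈ r.support := by
            have : x ∈ q.reverse.support := by
              rw [Walk.support_reverse]; exact List.mem_reverse.2 hxs
            rw [hqr, Walk.support_cons, List.mem_cons] at this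
            rcases this with h1 | h1
            · exact absurd (h1 ▸ hx) G.irrefl
            · exact h1
          set s := r.takeUntil x hxr with hs
          have hsPath : s.IsPath := hrPath.takeUntil hxr
          have husupp : u ∉ s.support := fun hu => hur (r.support_takeUntil_subset hxr hu)
          have hP1 : (Walk.cons h s).IsPath :=
            (Walk.cons_isPath_iff _ _).2 ⟨hsPath, husupp⟩
          have hcyc : (Walk.cons hx.symm (Walk.cons h s)).IsCycle := by
            rw [Walk.cons_isCycle_iff]
            refine ⟨hP1, ?_⟩
            intro hmem
            rw [Walk.edges_cons, List.mem_cons] at hmem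
            rcases hmem with h1 | h1
            · rw [Sym2.eq_iff] at h1
              rcases h1 with ⟨ha, hb⟩ | ⟨ha, hb⟩
              · exact G.irrefl (ha ▸ hx)
              · exact hxt ha
            · rw [Sym2.eq_swap] at h1
              exact husupp (s.fst_mem_support_of_mem_edges h1)
          exact hA _ hcyc
        · -- longer path
          have hxs' : x ∉ q.reverse.support := by
            rw [Walk.support_reverse]; exact fun hh => hxs (List.mem_reverse.1 hh)
          have hlong : (Walk.cons hx.symm q.reverse).IsPath :=
            (Walk.cons_isPath_iff _ _).2 ⟨hq.reverse, hxs'⟩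
          have := hmax x (Walk.cons hx.symm q.reverse).reverse hlong.reverse
          rw [Walk.length_reverse, Walk.length_cons, Walk.length_reverse] at this
          omega
      -- delete the leaf edge
      set e : Sym2 V := s(u, t) with he
      have heG : e ∈ G.edgeSet := h
      set G' := G.deleteEdges {e} with hG'
      have hle : G' ≤ G := G.deleteEdges_le _
      have hA' : G'.IsAcyclic := fun w c hc => hA (c.mapLe hle) (hc.mapLe hle)
      have hfinset : G'.edgeSet.toFinite.toFinset = (G.edgeSet.toFinite.toFinset).erase e := by
        ext e'
        simp [hG', SimpleGraph.edgeSet_deleteEdges, and_comm]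
      have hcard' : G'.edgeSet.toFinite.toFinset.card ≤ n := by
        rw [hfinset, Finset.card_erase_of_mem ((Set.Finite.mem_toFinset _).2 heG)]
        omega
      have heR : e ∉ r.edges := by
        intro hh
        rw [he] at hh
        exact hur (r.fst_mem_support_of_mem_edges hh)
      have hrt : G'.Reachable v t := by
        refine ⟨(r.toDeleteEdges {e} ?_).reverse⟩
        intro e' he'
        simp only [Set.mem_singleton_iff]
        exact fun hh => heR (hh ▸ he')
      obtain ⟨p', hp'cov, hp'cnt⟩ := ih G' hA' v hcard'
      set Pw := p'.mapLe hle with hPw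
      have hid : ⇑(SimpleGraph.Hom.ofLE hle) = id := funext fun x => rfl
      have hsupP : Pw.support = p'.support := by
        rw [hPw, Walk.mapLe, Walk.support_map, hid, List.map_id]
      have hedgP : Pw.edges = p'.edges := by
        rw [hPw, Walk.mapLe, Walk.edges_map, hid]
        simp [Sym2.map_id]
      have htP : t ∈ Pw.support := by rw [hsupP]; exact hp'cov t hrt
      set detour : G.Walk t t := Walk.cons h.symm (Walk.cons h Walk.nil) with hdet
      set p : G.Walk v v :=
        (Pw.takeUntil t htP).append (detour.append (Pw.dropUntil t htP)) with hp
      have hPsub : ∀ w, w ∈ Pw.support → w ∈ p.support := by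
        intro w hw
        rw [← Pw.take_spec htP, Walk.mem_support_append_iff] at hw
        rw [hp, Walk.mem_support_append_iff, Walk.mem_support_append_iff]
        tauto
      have hu_in : u ∈ p.support := by
        rw [hp, Walk.mem_support_append_iff, Walk.mem_support_append_iff]
        right; left
        rw [hdet]
        simp
      refine ⟨p, ?_, ?_⟩
      · -- coverage
        intro w hw
        obtain ⟨π0⟩ := hw
        set π : G.Walk v w := (π0.toPath : G.Walk v w) with hπ
        have hπP : π.IsPath := π0.toPath.2
        by_cases heπ : e ∈ π.edges
        · -- w must be u
          by_cases hwu : w = u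
          · subst hwu; exact hu_in
          · exfalso
            have hu_supp : u ∈ π.support := π.fst_mem_support_of_mem_edges (he ▸ heπ)
            have hvu : v ≠ u := by
              intro hh
              exact hur (hh ▸ r.end_mem_support)
            set π1 := π.takeUntil u hu_supp with hπ1
            set π2 := π.dropUntil u hu_supp with hπ2
            have hπ1P : π1.IsPath := hπP.takeUntil hu_supp
            have hπ2P : π2.IsPath := hπP.dropUntil hu_supp
            -- t in π1.support
            obtain ⟨y, h1, σ, hσ⟩ := Walk.exists_eq_cons_of_ne (Ne.symm hvu) π1.reverse
            have hyt : y = t := hleaf y h1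
            have ht1 : t ∈ π1.support := by
              have : t ∈ π1.reverse.support := by
                rw [hσ, Walk.support_cons]
                right
                exact hyt ▸ σ.start_mem_support
              rw [Walk.support_reverse] at this
              exact List.mem_reverse.1 this
            -- t in π2.support.tail
            obtain ⟨z, h2, ρ, hρ⟩ := Walk.exists_eq_cons_of_ne (fun hh => hwu hh.symm) π2
            have hzt : z = t := hleaf z h2
            have ht2 : t ∈ π2.support.tail := by
              rw [hρ, Walk.support_cons, List.tail_cons]
              exact hzt ▸ ρ.start_mem_support
            have hnodup : (π1.support ++ π2.support.tail).Nodup := by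
              have := hπP.support_nodup
              rwa [← π.take_spec hu_supp, Walk.support_append] at this
            exact (List.disjoint_of_nodup_append hnodup) ht1 ht2
        · -- reroute through G'
          have : G'.Reachable v w := by
            refine ⟨π.toDeleteEdges {e} ?_⟩
            intro e' he'
            simp only [Set.mem_singleton_iff]
            exact fun hh => heπ (hh ▸ he')
          exact hPsub w (hsupP ▸ hp'cov w this)
      · -- edge counts
        intro e'
        have hedges : p.edges = (Pw.takeUntil t htP).edges ++
            ((e :: e :: []) ++ (Pw.dropUntil t htP).edges) := by
          rw [hp, Walk.edges_append, Walk.edges_append, hdet]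
          simp only [Walk.edges_cons, Walk.edges_nil]
          rw [he, Sym2.eq_swap]
        have hPedge : (Pw.takeUntil t htP).edges ++ (Pw.dropUntil t htP).edges = Pw.edges := by
          rw [← Walk.edges_append, Pw.take_spec htP]
        have hcnt_split : p.edges.count e' = Pw.edges.count e' + (e :: e :: []).count e' := by
          rw [hedges, ← hPedge]
          simp only [List.count_append, List.count_cons, List.count_nil]
          omega
        rw [hcnt_split, hedgP]
        by_cases hee : e' = e
        · rw [hee]
          have hnot : e ∉ p'.edges := by
            intro hh
            have hmm := p'.edges_subset_edgeSet hh
            rw [hG', SimpleGraph.edgeSet_deleteEdges] at hmm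
            exact hmm.2 rfl
          rw [List.count_eq_zero.2 hnot]
          simp
        · have h2 : (e :: e :: []).count e' = 0 := by
            simp [List.count_cons, hee, Ne.symm hee]
          rw [h2]
          simpa using hp'cnt e'

open SimpleGraph in
lemma reachable_deleteEdge {V : Type*} {G : SimpleGraph V} {v w : V}
    (hR : (G.deleteEdges {s(v, w)}).Reachable v w) :
    ∀ a b, G.Reachable a b → (G.deleteEdges {s(v, w)}).Reachable a b := by
  intro a b hab
  obtain ⟨q⟩ := hab
  induction q with
  | nil => exact Reachable.refl _
  | @cons a x b hax q ih =>
    refine Reachable.trans ?_ ih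
    by_cases hvw : s(a, x) = s(v, w)
    · rw [Sym2.eq_iff] at hvw
      rcases hvw with ⟨rfl, rfl⟩ | ⟨rfl, rfl⟩
      · exact hR
      · exact hR.symm
    · exact Adj.reachable (by simp [SimpleGraph.deleteEdges_adj, hax, hvw])

open SimpleGraph in
lemma exists_tree (V : Type*) [Fintype V] [Nonempty V] :
    ∃ T : SimpleGraph V, T.IsTree := by
  classical
  suffices h : ∀ (n : ℕ) (G : SimpleGraph V), G.Connected →
      G.edgeSet.toFinite.toFinset.card ≤ n → ∃ T : SimpleGraph V, T.IsTree by
    exact h (⊤ : SimpleGraph V).edgeSet.toFinite.toFinset.card ⊤ connected_top le_rfl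
  intro n
  induction n with
  | zero =>
    intro G hc hcard
    refine ⟨G, hc, ?_⟩
    intro v c hcyc
    cases c with
    | nil => exact hcyc.not_of_nil
    | cons hadj q =>
      have hE := G.mem_edgeSet.2 hadj
      have hmem := (Set.Finite.mem_toFinset G.edgeSet.toFinite).2 hE
      have := Finset.card_pos.2 ⟨_, hmem⟩
      omega
  | succ n ih =>
    intro G hc hcard
    by_cases hac : G.IsAcyclic
    · exact ⟨G, hc, hac⟩
    · rw [SimpleGraph.isAcyclic_iff_forall_adj_isBridge] at hac
      push_neg at hac
      obtain ⟨v, w, hvw, hbr⟩ := hac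
      have hR : (G.deleteEdges {s(v, w)}).Reachable v w := by
        by_contra hnR
        exact hbr (isBridge_iff.2 hnR)
      set G' := G.deleteEdges {s(v, w)} with hG'
      have hpre : G'.Preconnected := fun a b => reachable_deleteEdge hR a b (hc.preconnected a b)
      have hc' : G'.Connected := ⟨hpre⟩
      have hcard' : G'.edgeSet.toFinite.toFinset.card ≤ n := by
        have hfinset : G'.edgeSet.toFinite.toFinset
            = (G.edgeSet.toFinite.toFinset).erase s(v, w) := by
          ext e'
          simp only [Set.Finite.mem_toFinset, hG', SimpleGraph.edgeSet_deleteEdges,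
            Set.mem_diff, Set.mem_singleton_iff, Finset.mem_erase]
          tauto
        rw [hfinset,
          Finset.card_erase_of_mem ((Set.Finite.mem_toFinset _).2 (G.mem_edgeSet.2 hvw))]
        omega
      exact ih G' hc' hcard'

/-- The minimum total edge weight of a spanning tree of the complete graph on the
finite point set `X`, edges weighted by distance. -/
noncomputable def MSTweight {M : Type*} [MetricSpace M] (X : Finset M) : ℝ :=
  sInf { w : ℝ | ∃ G : SimpleGraph X, G.IsTree ∧
    w = ∑ e ∈ (G.edgeSet.toFinite.toFinset),
      Sym2.lift ⟨fun (a b : X) => dist (a : M) (b : M), fun _ _ => dist_comm _ _⟩ e }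

/-- `C` is an `r`-net of `X`: `C ⊆ X`, every point of `X` is within distance `r`
of some center in `C`, and distinct centers are at distance more than `r`. -/
def IsNet {M : Type*} [MetricSpace M] (r : ℝ) (C X : Set M) : Prop :=
  C ⊆ X ∧ (∀ x ∈ X, ∃ c ∈ C, dist c x ≤ r) ∧
    ∀ c ∈ C, ∀ c' ∈ C, c ≠ c' → r < dist c c'

/-- If `C` is an `r`-net of a finite nonempty set `X`, then
`(|C| − 1) · r ≤ 2 · MST(X)`. -/
theorem net_size_bound {M : Type*} [MetricSpace M] (r : ℝ) (hr : 0 ≤ r)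
    (X C : Finset M) (hX : X.Nonempty) (hnet : IsNet r (C : Set M) (X : Set M)) :
    ((C.card : ℝ) - 1) * r ≤ 2 * MSTweight X := by
  classical
  obtain ⟨hCX, hcov, hsep⟩ := hnet
  set wt : Sym2 ↥X → ℝ :=
    Sym2.lift ⟨fun (a b : X) => dist (a : M) (b : M), fun _ _ => dist_comm _ _⟩ with hwtdef
  set S : Set ℝ := { w : ℝ | ∃ G : SimpleGraph X, G.IsTree ∧
    w = ∑ e ∈ (G.edgeSet.toFinite.toFinset), wt e } with hS
  have hwt0 : ∀ e : Sym2 ↥X, 0 ≤ wt e := by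
    intro e
    induction e using Sym2.ind with
    | _ a b => simpa [hwtdef] using dist_nonneg (x := (a : M)) (y := (b : M))
  haveI : Nonempty ↥X := ⟨⟨hX.choose, hX.choose_spec⟩⟩
  have hSne : S.Nonempty := by
    obtain ⟨T, hT⟩ := exists_tree ↥X
    exact ⟨_, T, hT, rfl⟩
  have key : ∀ w ∈ S, ((C.card : ℝ) - 1) * r ≤ 2 * w := by
    rintro w ⟨G, hG, rfl⟩
    obtain ⟨v⟩ := (inferInstance : Nonempty ↥X)
    obtain ⟨p, hcovp, hcntp⟩ :=
      exists_euler_walk (G.edgeSet.toFinite.toFinset.card) G hG.2 v le_rfl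
    set l := p.support.dedup with hl
    have hl1 : l.Nodup := p.support.nodup_dedup
    have hl2 : ∀ a : ↥X, a ∈ l := fun a => List.mem_dedup.2 (hcovp a (hG.1.preconnected v a))
    have hsubl : l.Sublist p.support := p.support.dedup_sublist
    have hupper : seqCost (l.map Subtype.val) ≤ 2 * ∑ e ∈ G.edgeSet.toFinite.toFinset, wt e := by
      calc seqCost (l.map Subtype.val) ≤ seqCost (p.support.map Subtype.val) :=
            seqCost_sublist (hsubl.map _)
      _ = (p.edges.map wt).sum := seqCost_walk_support (Subtype.val : ↥X → M) p
      _ ≤ 2 * ∑ e ∈ G.edgeSet.toFinite.toFinset, wt e :=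
            sum_map_le_two_sum wt hwt0 _ _
              (fun e he => (Set.Finite.mem_toFinset _).2 (p.edges_subset_edgeSet he)) hcntp
    set L' := (l.map Subtype.val).filter (fun a => a ∈ C) with hL'
    have hsub2 : L'.Sublist (l.map Subtype.val) := List.filter_sublist
    have hnodupL : (l.map Subtype.val).Nodup := hl1.map Subtype.val_injective
    have hL'nodup : L'.Nodup := hnodupL.sublist hsub2
    have hmemL' : ∀ a, a ∈ L' ↔ a ∈ C := by
      intro a
      rw [hL', List.mem_filter]
      simp only [decide_eq_true_eq]
      constructor
      · rintro ⟨_, h2⟩; exact h2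
      · intro ha
        refine ⟨?_, ha⟩
        have haX : a ∈ X := hCX ha
        exact List.mem_map.2 ⟨⟨a, haX⟩, hl2 _, rfl⟩
    have hlen : L'.length = C.card := by
      have ht : L'.toFinset = C := Finset.ext (fun a => by
        rw [List.mem_toFinset]; exact hmemL' a)
      rw [← ht, List.toFinset_card_of_nodup hL'nodup]
    have hpair : L'.Pairwise (fun a b => r < dist a b) := by
      refine List.Pairwise.imp_of_mem ?_ hL'nodup
      intro a b ha hb hne
      exact hsep a (by simpa using (hmemL' a).1 ha) b (by simpa using (hmemL' b).1 hb) hne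
    have hlower := seqCost_separated hr L' hpair
    rw [hlen] at hlower
    have := le_trans hlower (le_trans (seqCost_sublist hsub2) hupper)
    linarith
  have h1 : ((C.card : ℝ) - 1) * r / 2 ≤ sInf S :=
    le_csInf hSne (fun w hw => by linarith [key w hw])
  have h2 : MSTweight X = sInf S := rfl
  rw [h2]
  linarith
end

section
/- There exist a constant α > 0 and an integer N such that for every integer m ≥ N the following holds. Let n = m^5, let U be a set of m^4 points, and let M = U ∪ {x} (x ∉ U) be the metric space with d(u,u') = 1 for distinct u, u' ∈ U and d(u,x) = m^4 for all u ∈ U. Fix an enumeration u_1,…,u_{m^4} of U and call the sequence u_1,…,u_{m^4} an epoch. For j = 1,…,m, let X_j ∈ M^n be the input consisting of j−1 consecutive epochs followed by n − (j−1)·m^4 copies of x, and let X_{m+1} ∈ M^n consist of m consecutive epochs; set p_j = (1 − m^{−3})^{j−1}·m^{−3} for j = 1,…,m and p_{m+1} = (1 − m^{−3})^m. Then for every deterministic online strategy A for placing n points of M into an array of length n, Σ_{j=1}^{m+1} p_j · cost(A, X_j) ≥ α·n. -/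
/-- The cost of a fully filled length-`n` array: the sum of distances between
consecutive cells. -/
noncomputable def arrayCost {M : Type*} [MetricSpace M] {n : ℕ} (A : Fin n → M) : ℝ :=
  ∑ i : Fin (n - 1),
    dist (A ⟨i.val, by have := i.isLt; omega⟩) (A ⟨i.val + 1, by have := i.isLt; omega⟩)

/-- `OPT` of a finite input sequence: the minimum, over all ways of arranging the
points in an array, of the resulting cost. -/
noncomputable def OPTseq {M : Type*} [MetricSpace M] {m : ℕ} (X : Fin m → M) : ℝ :=
  sInf { c : ℝ | ∃ σ : Equiv.Perm (Fin m), c = arrayCost (X ∘ σ) }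

/-- A deterministic online strategy placing `m` points into an array of length `n`:
the `i`-th point is placed, as a function of the points seen so far, into a cell
not used before. -/
structure OnlineStrategy (M : Type*) (m n : ℕ) where
  place : ∀ i : Fin m, (Fin (i.val + 1) → M) → Fin n
  valid : ∀ X : Fin m → M, Function.Injective
    (fun i : Fin m => place i (fun j => X ⟨j.val, by have := j.isLt; have := i.isLt; omega⟩))

/-- The cell into which the strategy places the `i`-th point of input `X`. -/
def placements {M : Type*} {m n : ℕ} (S : OnlineStrategy M m n) (X : Fin m → M) :
    Fin m → Fin n :=
  fun i => S.place i (fun j => X ⟨j.val, by have := j.isLt; have := i.isLt; omega⟩)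

/-- The full array produced by a strategy placing `n` points into `n` cells. -/
noncomputable def producedArray {M : Type*} {n : ℕ} (S : OnlineStrategy M n n)
    (X : Fin n → M) : Fin n → M :=
  fun k => X ((Equiv.ofBijective _ (Finite.injective_iff_bijective.mp (S.valid X))).symm k)

/-- The cost incurred by a strategy on input `X`. -/
noncomputable def strategyCost {M : Type*} [MetricSpace M] {n : ℕ} (S : OnlineStrategy M n n)
    (X : Fin n → M) : ℝ :=
  arrayCost (producedArray S X)

/-- The partially filled array produced by a strategy placing `m` points into `n` cells. -/
noncomputable def producedPartial {M : Type*} {m n : ℕ} (S : OnlineStrategy M m n)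
    (X : Fin m → M) : Fin n → Option M :=
  fun k => if h : ∃ i : Fin m, placements S X i = k then some (X h.choose) else none

noncomputable def optDist {M : Type*} [MetricSpace M] : Option M → Option M → ℝ
  | some a, some b => dist a b
  | _, _ => 0

/-- The cost of a partially filled array: the sum of distances between consecutive
non-empty cells. -/
noncomputable def partialCost {M : Type*} [MetricSpace M] {n : ℕ} (T : Fin n → Option M) : ℝ :=
  ∑ i : Fin (n - 1),
    optDist (T ⟨i.val, by have := i.isLt; omega⟩) (T ⟨i.val + 1, by have := i.isLt; omega⟩)

/-- The number of gaps (maximal nonempty runs of consecutive empty cells) of a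
partially filled array. -/
noncomputable def gaps {M : Type*} {n : ℕ} (T : Fin n → Option M) : ℕ :=
  Set.ncard {i : Fin n | T i = none ∧
    (i.val = 0 ∨ T ⟨i.val - 1, by have := i.isLt; omega⟩ ≠ none)}

set_option maxHeartbeats 1600000 in
/-- There are `α > 0` and `N` such that for every `m ≥ N` the
following holds. Let `n = m^5` and let `M = U ∪ {x}` be a metric space where `U` has
`m^4` points at pairwise distance `1` and `d(u,x) = m^4` for `u ∈ U`. Fix an
enumeration `u 0, …, u (m^4 - 1)` of `U` (an *epoch*). For `0 ≤ j ≤ m`, let `X_j` be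
the input consisting of `j` consecutive epochs followed by copies of `x`, with weight
`p_j = (1 - m⁻³)^j · m⁻³` for `j < m` and `p_m = (1 - m⁻³)^m`. Then every deterministic
online strategy `A` satisfies `∑_j p_j · cost(A, X_j) ≥ α·n`. -/
theorem oblivious_adversary_lower_bound :
    ∃ α : ℝ, 0 < α ∧ ∃ N : ℕ, ∀ m : ℕ, N ≤ m →
      ∀ (M : Type) (_inst : MetricSpace M) (U : Finset M) (x : M),
        x ∉ U →
        U.card = m ^ 4 →
        (∀ y : M, y ∈ U ∨ y = x) →
        (∀ u ∈ U, ∀ u' ∈ U, u ≠ u' → dist u u' = 1) →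
        (∀ u ∈ U, dist u x = (m : ℝ) ^ 4) →
        ∀ u : ℕ → M,
          (∀ i < m ^ 4, u i ∈ U) →
          (∀ i < m ^ 4, ∀ j < m ^ 4, i ≠ j → u i ≠ u j) →
          (∀ y ∈ U, ∃ i < m ^ 4, u i = y) →
          ∀ S : OnlineStrategy M (m ^ 5) (m ^ 5),
            α * (m : ℝ) ^ 5 ≤
              ∑ j ∈ Finset.range (m + 1),
                (if j = m then (1 - ((m : ℝ) ^ 3)⁻¹) ^ m
                 else (1 - ((m : ℝ) ^ 3)⁻¹) ^ j * ((m : ℝ) ^ 3)⁻¹) *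
                  strategyCost S (fun i : Fin (m ^ 5) =>
                    if (i : ℕ) < j * m ^ 4 then u ((i : ℕ) % m ^ 4) else x) := by
  refine ⟨1/4, by norm_num, 2, ?_⟩
  intro m hm M _inst U x hxU hcard hcover hU1 hUx u huU huinj husurj S
  have hm0 : 0 < m := by omega
  have hm4pos : 0 < m ^ 4 := by positivity
  have hn : m ^ 5 = m * m ^ 4 := by ring
  have hmR : (2 : ℝ) ≤ (m : ℝ) := by exact_mod_cast hm
  set q : ℝ := ((m : ℝ) ^ 3)⁻¹ with hqdef
  set w : ℕ → ℝ := fun j => if j = m then (1 - q) ^ m else (1 - q) ^ j * q with hwdef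
  set X : ℕ → Fin (m ^ 5) → M :=
    fun j i => if (i : ℕ) < j * m ^ 4 then u ((i : ℕ) % m ^ 4) else x with hXdef
  -- weight facts
  have hq_pos : 0 < q := by positivity
  have hm2 : (4:ℝ) ≤ (m:ℝ)^2 := by nlinarith
  have h8 : (8:ℝ) ≤ (m:ℝ)^3 := by nlinarith
  have hq_le : q ≤ 1/8 := by
    rw [hqdef]
    rw [inv_le_comm₀ (by positivity) (by norm_num)]
    linarith
  have h1q0 : (0:ℝ) ≤ 1 - q := by linarith
  have h1q1 : (1:ℝ) - q ≤ 1 := by linarith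
  have hwnonneg : ∀ j, 0 ≤ w j := by
    intro j
    rw [hwdef]
    dsimp only
    split
    · positivity
    · positivity
  have hwm : (1:ℝ)/2 ≤ w m := by
    have hb := one_add_mul_le_pow (a := -q) (by linarith) m
    have h2 : (1:ℝ) + m * (-q) = 1 - m * q := by ring
    have h3 : (1:ℝ) + (-q) = 1 - q := by ring
    rw [h2, h3] at hb
    have hmq : (m:ℝ) * q ≤ 1/2 := by
      rw [hqdef]
      rw [mul_inv_le_iff₀ (by positivity)]
      nlinarith [hm2, hmR]
    have : w m = (1 - q)^m := by rw [hwdef]; simp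
    rw [this]
    linarith
  have hwj : ∀ j, j < m → w m ≤ w j * (m:ℝ)^4 := by
    intro j hj
    have hwm' : w m = (1 - q)^m := by rw [hwdef]; simp
    have hwj' : w j = (1 - q)^j * q := by rw [hwdef]; simp [Nat.ne_of_lt hj]
    rw [hwm', hwj']
    have h1 : (1 - q)^m ≤ (1 - q)^j := pow_le_pow_of_le_one h1q0 h1q1 (le_of_lt hj)
    have h2 : q * (m:ℝ)^4 = m := by
      rw [hqdef]
      field_simp
    calc (1 - q)^m ≤ (1 - q)^j := h1
      _ ≤ (1 - q)^j * (m:ℝ) := le_mul_of_one_le_right (by positivity) (by linarith)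
      _ = (1 - q)^j * (q * (m:ℝ)^4) := by rw [h2]
      _ = (1 - q)^j * q * (m:ℝ)^4 := by ring
  -- placements and equivalences
  have hbij : ∀ j, Function.Bijective (placements S (X j)) :=
    fun j => Finite.injective_iff_bijective.mp (S.valid (X j))
  set ρ : ℕ → (Fin (m^5) ≃ Fin (m^5)) :=
    fun j => Equiv.ofBijective (placements S (X j)) (hbij j) with hρdef
  have hprod : ∀ j k, producedArray S (X j) k = X j ((ρ j).symm k) := fun j k => rfl
  have hρ_apply : ∀ j i, ρ j i = placements S (X j) i := fun j i => rfl
  -- prefix property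
  have hprefix : ∀ j : ℕ, j ≤ m → ∀ i : Fin (m ^ 5), (i : ℕ) < j * m ^ 4 →
      placements S (X j) i = placements S (X m) i := by
    intro j hj i hi
    unfold placements
    congr 1
    funext j'
    have hj' : (j' : ℕ) ≤ (i : ℕ) := Nat.lt_succ_iff.mp j'.isLt
    have hlt1 : (j' : ℕ) < j * m ^ 4 := lt_of_le_of_lt hj' hi
    have hlt2 : (j' : ℕ) < m * m ^ 4 := lt_of_lt_of_le hlt1 (Nat.mul_le_mul_right _ hj)
    show X j ⟨(j' : ℕ), _⟩ = X m ⟨(j' : ℕ), _⟩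
    rw [hXdef]
    dsimp only
    rw [if_pos hlt1, if_pos hlt2]
  have hsymm_lt : ∀ j, j ≤ m → ∀ k, (((ρ m).symm k : Fin (m^5)) : ℕ) < j * m ^ 4 →
      (ρ j).symm k = (ρ m).symm k := by
    intro j hj k hk
    rw [Equiv.symm_apply_eq]
    rw [hρ_apply, hprefix j hj _ hk]
    exact ((ρ m).apply_symm_apply k).symm
  have hsymm_lt' : ∀ j, j ≤ m → ∀ k, (((ρ j).symm k : Fin (m^5)) : ℕ) < j * m ^ 4 →
      (ρ j).symm k = (ρ m).symm k := by
    intro j hj k hk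
    have h1 : placements S (X m) ((ρ j).symm k) = k := by
      rw [← hprefix j hj _ hk]
      exact (ρ j).apply_symm_apply k
    exact ((Equiv.symm_apply_eq (ρ m)).mpr h1.symm).symm
  -- value lemmas
  have hval_lt : ∀ j, j ≤ m → ∀ k, (((ρ m).symm k : Fin (m^5)) : ℕ) < j * m ^ 4 →
      producedArray S (X j) k = u ((((ρ m).symm k : Fin (m^5)) : ℕ) % m ^ 4) := by
    intro j hj k hk
    rw [hprod j k, hsymm_lt j hj k hk]
    rw [hXdef]
    dsimp only
    rw [if_pos hk]
  have hval_ge : ∀ j, j ≤ m → ∀ k, ¬ ((((ρ m).symm k : Fin (m^5)) : ℕ) < j * m ^ 4) →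
      producedArray S (X j) k = x := by
    intro j hj k hk
    rw [hprod j k]
    have h2 : ¬ ((((ρ j).symm k : Fin (m^5)) : ℕ) < j * m ^ 4) := by
      intro h
      exact hk (by rw [← hsymm_lt' j hj k h]; exact h)
    rw [hXdef]
    dsimp only
    rw [if_neg h2]
  have hτlt : ∀ k : Fin (m^5), (((ρ m).symm k : Fin (m^5)) : ℕ) < m * m ^ 4 := by
    intro k
    have := ((ρ m).symm k).isLt
    omega
  have hval_m : ∀ k, producedArray S (X m) k = u ((((ρ m).symm k : Fin (m^5)) : ℕ) % m ^ 4) :=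
    fun k => hval_lt m le_rfl k (hτlt k)
  -- cross distance lemma
  have hcross : ∀ j, j ≤ m → ∀ p k : Fin (m^5),
      (((ρ m).symm p : Fin (m^5)) : ℕ) < j * m ^ 4 →
      ¬ ((((ρ m).symm k : Fin (m^5)) : ℕ) < j * m ^ 4) →
      dist (producedArray S (X j) p) (producedArray S (X j) k) = (m:ℝ)^4 := by
    intro j hj p k hp hk
    rw [hval_lt j hj p hp, hval_ge j hj k hk]
    exact hUx _ (huU _ (Nat.mod_lt _ hm4pos))
  -- the per-pair lower bound
  have hperk : ∀ k : Fin (m ^ 5 - 1),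
      w m ≤ ∑ j ∈ Finset.range (m + 1), w j *
        dist (producedArray S (X j) ⟨k.val, by have := k.isLt; omega⟩)
             (producedArray S (X j) ⟨k.val + 1, by have := k.isLt; omega⟩) := by
    intro k
    set k₀ : Fin (m^5) := ⟨k.val, by have := k.isLt; omega⟩ with hk₀
    set k₁ : Fin (m^5) := ⟨k.val + 1, by have := k.isLt; omega⟩ with hk₁
    set a : ℕ := (((ρ m).symm k₀ : Fin (m^5)) : ℕ) with ha
    set b : ℕ := (((ρ m).symm k₁ : Fin (m^5)) : ℕ) with hb
    have hab : a ≠ b := by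
      intro h
      have h1 : (ρ m).symm k₀ = (ρ m).symm k₁ := Fin.ext h
      have h2 : k₀ = k₁ := (ρ m).symm.injective h1
      have h3 : k.val = k.val + 1 := congrArg Fin.val h2
      omega
    have haM : a < m * m ^ 4 := hτlt k₀
    have hbM : b < m * m ^ 4 := hτlt k₁
    have hnonneg : ∀ j ∈ Finset.range (m + 1),
        0 ≤ w j * dist (producedArray S (X j) k₀) (producedArray S (X j) k₁) :=
      fun j _ => mul_nonneg (hwnonneg j) dist_nonneg
    by_cases hdiv : a / m ^ 4 = b / m ^ 4
    · -- same epoch: term j = m contributes w m * 1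
      have hmod : a % m ^ 4 ≠ b % m ^ 4 := by
        intro h
        apply hab
        rw [← Nat.div_add_mod a (m ^ 4), ← Nat.div_add_mod b (m ^ 4), hdiv, h]
      have hdist : dist (producedArray S (X m) k₀) (producedArray S (X m) k₁) = 1 := by
        rw [hval_m k₀, hval_m k₁]
        exact hU1 _ (huU _ (Nat.mod_lt _ hm4pos)) _ (huU _ (Nat.mod_lt _ hm4pos))
          (huinj _ (Nat.mod_lt _ hm4pos) _ (Nat.mod_lt _ hm4pos) hmod)
      have hmem : m ∈ Finset.range (m + 1) := Finset.self_mem_range_succ m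
      calc w m = w m * dist (producedArray S (X m) k₀) (producedArray S (X m) k₁) := by
            rw [hdist]; ring
        _ ≤ _ := Finset.single_le_sum hnonneg hmem
    · -- crossing pair
      have hadiv : a / m ^ 4 < m := (Nat.div_lt_iff_lt_mul hm4pos).mpr haM
      have hbdiv : b / m ^ 4 < m := (Nat.div_lt_iff_lt_mul hm4pos).mpr hbM
      set j₀ : ℕ := max (a / m ^ 4) (b / m ^ 4) with hj₀
      have hj₀m : j₀ < m := by omega
      have hmem : j₀ ∈ Finset.range (m + 1) := Finset.mem_range.mpr (by omega)
      have hdist : dist (producedArray S (X j₀) k₀) (producedArray S (X j₀) k₁) = (m:ℝ)^4 := by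
        rcases Nat.lt_or_ge (a / m ^ 4) (b / m ^ 4) with hlt | hge
        · have hj₀b : j₀ = b / m ^ 4 := by omega
          have hpa : a < j₀ * m ^ 4 := (Nat.div_lt_iff_lt_mul hm4pos).mp (by omega)
          have hpb : ¬ (b < j₀ * m ^ 4) := by
            intro h
            have := (Nat.div_lt_iff_lt_mul hm4pos).mpr h
            omega
          exact hcross j₀ (le_of_lt hj₀m) k₀ k₁ hpa hpb
        · have hlt : b / m ^ 4 < a / m ^ 4 := by omega
          have hpb : b < j₀ * m ^ 4 := (Nat.div_lt_iff_lt_mul hm4pos).mp (by omega)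
          have hpa : ¬ (a < j₀ * m ^ 4) := by
            intro h
            have := (Nat.div_lt_iff_lt_mul hm4pos).mpr h
            omega
          rw [dist_comm]
          exact hcross j₀ (le_of_lt hj₀m) k₁ k₀ hpb hpa
      calc w m ≤ w j₀ * (m:ℝ)^4 := hwj j₀ hj₀m
        _ = w j₀ * dist (producedArray S (X j₀) k₀) (producedArray S (X j₀) k₁) := by
            rw [hdist]
        _ ≤ _ := Finset.single_le_sum hnonneg hmem
  -- assemble
  have hcost : ∀ j, strategyCost S (X j) = ∑ k : Fin (m ^ 5 - 1),
      dist (producedArray S (X j) ⟨k.val, by have := k.isLt; omega⟩)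
           (producedArray S (X j) ⟨k.val + 1, by have := k.isLt; omega⟩) := fun j => rfl
  have hcard5 : ((m ^ 5 - 1 : ℕ) : ℝ) = (m:ℝ)^5 - 1 := by
    have h1 : 1 ≤ m ^ 5 := Nat.one_le_pow _ _ hm0
    push_cast [Nat.cast_sub h1]
    ring
  have hm5 : (32:ℝ) ≤ (m:ℝ)^5 := by nlinarith
  show (1/4 : ℝ) * (m:ℝ)^5 ≤ ∑ j ∈ Finset.range (m + 1), w j * strategyCost S (X j)
  calc (1/4 : ℝ) * (m:ℝ)^5 ≤ ((m:ℝ)^5 - 1) * ((1:ℝ)/2) := by nlinarith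
    _ ≤ ((m:ℝ)^5 - 1) * w m := by
        have : (0:ℝ) ≤ (m:ℝ)^5 - 1 := by linarith
        nlinarith
    _ = ∑ _k : Fin (m ^ 5 - 1), w m := by
        rw [Finset.sum_const, Finset.card_univ, Fintype.card_fin, nsmul_eq_mul, hcard5]
    _ ≤ ∑ k : Fin (m ^ 5 - 1), ∑ j ∈ Finset.range (m + 1), w j *
          dist (producedArray S (X j) ⟨k.val, by have := k.isLt; omega⟩)
               (producedArray S (X j) ⟨k.val + 1, by have := k.isLt; omega⟩) :=
        Finset.sum_le_sum (fun k _ => hperk k)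
    _ = ∑ j ∈ Finset.range (m + 1), ∑ k : Fin (m ^ 5 - 1), w j *
          dist (producedArray S (X j) ⟨k.val, by have := k.isLt; omega⟩)
               (producedArray S (X j) ⟨k.val + 1, by have := k.isLt; omega⟩) :=
        Finset.sum_comm
    _ = ∑ j ∈ Finset.range (m + 1), w j * strategyCost S (X j) := by
        refine Finset.sum_congr rfl (fun j _ => ?_)
        rw [hcost j, Finset.mul_sum]
end

section
/- Let B ≥ 0 and 0 ≤ q ≤ 1 be real numbers, and let L, H : ℕ → ℝ be sequences with L(0) = H(0) = 0 such that for every integer i ≥ 1: H(i) ≥ B/8 + q·min(L(i−1), H(i−1)) and L(i) ≥ q·min(3B/16 + L(i−1), H(i−1)). Then for every integer i ≥ 0: H(i) ≥ i·B·q^i/16 and L(i) ≥ (i−1)·B·q^i/16 (where i−1 is taken as an integer, so the second bound is vacuous for i = 0). -/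
/-- Let `B ≥ 0`, `0 ≤ q ≤ 1`, and let `L, H : ℕ → ℝ` satisfy
`L 0 = H 0 = 0`, `H i ≥ B/8 + q·min (L (i−1)) (H (i−1))` and
`L i ≥ q·min (3B/16 + L (i−1)) (H (i−1))` for every `i ≥ 1`. Then for every `i`,
`H i ≥ i·B·qⁱ/16` and `L i ≥ (i−1)·B·qⁱ/16`. -/
theorem recurrence_lower_bound (B q : ℝ) (hB : 0 ≤ B) (hq₀ : 0 ≤ q) (hq₁ : q ≤ 1)
    (L H : ℕ → ℝ) (hL0 : L 0 = 0) (hH0 : H 0 = 0)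
    (hH : ∀ i : ℕ, 1 ≤ i → B / 8 + q * min (L (i - 1)) (H (i - 1)) ≤ H i)
    (hL : ∀ i : ℕ, 1 ≤ i → q * min (3 * B / 16 + L (i - 1)) (H (i - 1)) ≤ L i) :
    ∀ i : ℕ, (i : ℝ) * B * q ^ i / 16 ≤ H i ∧ ((i : ℝ) - 1) * B * q ^ i / 16 ≤ L i := by
  intro i
  induction i with
  | zero =>
    constructor
    · simp [hH0]
    · simp only [hL0, Nat.cast_zero, pow_zero]
      nlinarith
  | succ n ih =>
    obtain ⟨ihH, ihL⟩ := ih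
    have hqn : q ^ n ≤ 1 := pow_le_one₀ hq₀ hq₁
    have hqn0 : 0 ≤ q ^ n := pow_nonneg hq₀ n
    have hH' := hH (n + 1) (by omega)
    have hL' := hL (n + 1) (by omega)
    simp only [Nat.add_sub_cancel] at hH' hL'
    have hmin1 : ((n : ℝ) - 1) * B * q ^ n / 16 ≤ min (L n) (H n) := by
      refine le_min ihL (le_trans ?_ ihH)
      nlinarith
    have hmin2 : (n : ℝ) * B * q ^ n / 16 ≤ min (3 * B / 16 + L n) (H n) := by
      refine le_min ?_ ihH
      nlinarith
    have h1 : q * (((n : ℝ) - 1) * B * q ^ n / 16) ≤ q * min (L n) (H n) :=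
      mul_le_mul_of_nonneg_left hmin1 hq₀
    have h2 : q * ((n : ℝ) * B * q ^ n / 16) ≤ q * min (3 * B / 16 + L n) (H n) :=
      mul_le_mul_of_nonneg_left hmin2 hq₀
    have e1 : q * (((n : ℝ) - 1) * B * q ^ n / 16) = ((n : ℝ) - 1) * B * q ^ (n + 1) / 16 := by
      ring
    have e2 : q * ((n : ℝ) * B * q ^ n / 16) = (n : ℝ) * B * q ^ (n + 1) / 16 := by
      ring
    rw [e1] at h1
    rw [e2] at h2
    have hqn1 : q ^ (n + 1) ≤ 1 := pow_le_one₀ hq₀ hq₁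
    have hb : B * q ^ (n + 1) ≤ B := by nlinarith
    constructor
    · push_cast
      nlinarith
    · push_cast
      nlinarith
end
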